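/- arXiv:2310.09972 — 4 statements merged into one kernel-verified Lean document; each statement's English description precedes it below -/
import Mathlib

section
/- Let A be a unital alternative algebra over a field F in which 2 is invertible, let B : V × V → F be a symmetric bilinear form on an F-vector space V, and let θ : V → A be a linear map such that θ(u)θ(v) + θ(v)θ(u) = B(u,v)·1 for all u, v in V, and (θ(u)θ(v))θ(w) = θ(w)(θ(v)θ(u)) for all u, v, w in V. Then for all a, b, c in V: (θ(a)θ(b))θ(c) + θ(a)(θ(b)θ(c)) = B(b,c)·θ(a) - B(c,a)·θ(b) + B(a,b)·θ(c). -/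
theorem kingdon_reduction
    {F A V : Type*} [Field F] [Invertible (2 : F)]
    [NonAssocRing A] [Module F A] [SMulCommClass F A A] [IsScalarTower F A A]
    [AddCommGroup V] [Module F V]
    (halt1 : ∀ x y : A, x * (x * y) = (x * x) * y)
    (halt2 : ∀ x y : A, y * (x * x) = (y * x) * x)
    (B : V →ₗ[F] V →ₗ[F] F) (hBsymm : ∀ u v : V, B u v = B v u)
    (θ : V →ₗ[F] A)
    (hcliff : ∀ u v : V, θ u * θ v + θ v * θ u = B u v • (1 : A))
    (hpal : ∀ u v w : V, (θ u * θ v) * θ w = θ w * (θ v * θ u)) :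
    ∀ a b c : V,
      (θ a * θ b) * θ c + θ a * (θ b * θ c) =
        B b c • θ a - B c a • θ b + B a b • θ c := by
  -- linearized left alternativity
  have key : ∀ p q r : A, p * (r * q) + r * (p * q) = (p * r + r * p) * q := by
    intro p q r
    have h := halt1 (p + r) q
    simp only [add_mul, mul_add] at h ⊢
    rw [halt1, halt1] at h
    -- cancel the square terms
    have h' : p * (r * q) + r * (p * q) =
        (p * p * q + r * (p * q) + (p * (r * q) + r * r * q))
          - (p * p * q + r * r * q) := by abel
    rw [h', h]
    abel
  intro a b c
  set x := θ a with hx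
  set y := θ b with hy
  set z := θ c with hz
  have hba : y * x = B a b • (1 : A) - x * y := eq_sub_of_add_eq' (hcliff a b)
  have hcb : z * y = B b c • (1 : A) - y * z := eq_sub_of_add_eq' (hcliff b c)
  have h1 : (x * y) * z = z * (y * x) := hpal a b c
  have h2 : x * (y * z) = (z * y) * x := (hpal c b a).symm
  have h3 : (y * z) * x = x * (z * y) := hpal b c a
  have h5 : z * (x * y) + x * (z * y) = B c a • y := by
    have := key z y x
    rw [this]
    rw [show z * x + x * z = B c a • (1 : A) from hcliff c a]
    rw [smul_mul_assoc, one_mul]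
  rw [h1, h2, hba, hcb, mul_sub, sub_mul, mul_smul_comm, mul_one, smul_mul_assoc, one_mul, h3]
  rw [← h5]
  abel
end

section
/- Let A be a unital alternative algebra over a field F with 2 invertible, and let a, b, c in A satisfy ab + ba = β·1, bc + cb = γ·1, ca + ac = α·1 for scalars α, β, γ, together with the palindromic relations (xy)z = z(yx) for all x, y, z among {a,b,c}. Then (ca)b + (cb)a = β·c. -/
theorem kingdon_cab_cba
    {F A : Type*} [Field F] [Invertible (2 : F)]
    [NonAssocRing A] [Module F A] [SMulCommClass F A A] [IsScalarTower F A A]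
    (halt1 : ∀ x y : A, x * (x * y) = (x * x) * y)
    (halt2 : ∀ x y : A, y * (x * x) = (y * x) * x)
    (a b c : A) (α β γ : F)
    (hab : a * b + b * a = β • (1 : A))
    (hbc : b * c + c * b = γ • (1 : A))
    (hca : c * a + a * c = α • (1 : A))
    (hpal : ∀ x ∈ ({a, b, c} : Set A), ∀ y ∈ ({a, b, c} : Set A),
      ∀ z ∈ ({a, b, c} : Set A), (x * y) * z = z * (y * x)) :
    (c * a) * b + (c * b) * a = β • c := by
  have key : ∀ x y z : A, x * (y * z) + x * (z * y) = (x * y) * z + (x * z) * y := by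
    intro x y z
    have h := halt2 (y + z) x
    simp only [mul_add, add_mul] at h
    rw [halt2 y x, halt2 z x] at h
    have h2 : x * (y * z) + x * (z * y) - ((x * y) * z + (x * z) * y) = 0 := by
      have h3 := sub_eq_zero_of_eq h
      rw [← h3]; abel
    exact sub_eq_zero.mp h2
  calc (c * a) * b + (c * b) * a = c * (a * b) + c * (b * a) := (key c a b).symm
    _ = c * (a * b + b * a) := by rw [mul_add]
    _ = c * (β • (1 : A)) := by rw [hab]
    _ = β • c := by rw [mul_smul_comm, mul_one]
end

section
/- Let A be a unital alternative algebra over a field with 2 invertible, and let i, j, k be elements with i² = j² = k² = 0 which pairwise anticommute (ij = -ji, jk = -kj, ki = -ik) and satisfy (xy)z = z(yx) for x,y,z ∈ {i,j,k}. Set ω = (ij)k. Then ω·x = x·ω = 0 for every x in the linear span of {i, j, k, ij, jk, ki, ω}, and (ij)(jk) = (jk)(ki) = (ki)(ij) = 0. -/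
theorem alternative_exterior_omega_annihilates
    {F A : Type*} [Field F] [Invertible (2 : F)]
    [NonAssocRing A] [Module F A] [SMulCommClass F A A] [IsScalarTower F A A]
    (halt1 : ∀ x y : A, x * (x * y) = (x * x) * y)
    (halt2 : ∀ x y : A, y * (x * x) = (y * x) * x)
    (i j k : A)
    (hi : i * i = 0) (hj : j * j = 0) (hk : k * k = 0)
    (hij : i * j = -(j * i)) (hjk : j * k = -(k * j)) (hki : k * i = -(i * k))
    (hpal : ∀ x ∈ ({i, j, k} : Set A), ∀ y ∈ ({i, j, k} : Set A),
      ∀ z ∈ ({i, j, k} : Set A), (x * y) * z = z * (y * x)) :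
    (∀ x ∈ Submodule.span F
        ({i, j, k, i * j, j * k, k * i, (i * j) * k} : Set A),
      ((i * j) * k) * x = 0 ∧ x * ((i * j) * k) = 0) ∧
    (i * j) * (j * k) = 0 ∧ (j * k) * (k * i) = 0 ∧ (k * i) * (i * j) = 0 := by
  -- linearized left alternativity
  have L : ∀ x y z : A, x * (y * z) + y * (x * z) = (x * y) * z + (y * x) * z := by
    intro x y z
    have e : (x * (y * z) + y * (x * z)) - ((x * y) * z + (y * x) * z)
        = ((x + y) * ((x + y) * z) - ((x + y) * (x + y)) * z)
          - (x * (x * z) - (x * x) * z) - (y * (y * z) - (y * y) * z) := by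
      simp only [add_mul, mul_add]; abel
    rw [halt1, halt1, halt1] at e
    simp only [sub_self, sub_zero, zero_sub, neg_zero, sub_eq_zero] at e
    exact e
  -- linearized right alternativity
  have R : ∀ x y z : A, (x * y) * z + (x * z) * y = x * (y * z) + x * (z * y) := by
    intro x y z
    have e : ((x * y) * z + (x * z) * y) - (x * (y * z) + x * (z * y))
        = ((x * (y + z)) * (y + z) - x * ((y + z) * (y + z)))
          - ((x * y) * y - x * (y * y)) - ((x * z) * z - x * (z * z)) := by
      simp only [add_mul, mul_add]; abel
    rw [← halt2, ← halt2, ← halt2] at e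
    simp only [sub_self, sub_zero, zero_sub, neg_zero, sub_eq_zero] at e
    exact e
  -- cancellation helpers for anticommuting pairs
  have Lc : ∀ a b : A, a * b + b * a = 0 → ∀ z : A, a * (b * z) = -(b * (a * z)) := by
    intro a b hab z
    have h := L a b z
    rw [← add_mul, hab, zero_mul] at h
    exact eq_neg_of_add_eq_zero_left h
  have Rc : ∀ a b : A, a * b + b * a = 0 → ∀ w : A, (w * a) * b = -((w * b) * a) := by
    intro a b hab w
    have h := R w a b
    rw [← mul_add, hab, mul_zero] at h
    exact eq_neg_of_add_eq_zero_left h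
  have hji : j * i = -(i * j) := by rw [hij, neg_neg]
  have hkj : k * j = -(j * k) := by rw [hjk, neg_neg]
  have hik : i * k = -(k * i) := by rw [hki, neg_neg]
  have s_ij : i * j + j * i = 0 := by rw [hij]; abel
  have s_jk : j * k + k * j = 0 := by rw [hjk]; abel
  have s_ki : k * i + i * k = 0 := by rw [hki]; abel
  have s_ji : j * i + i * j = 0 := by rw [hij]; abel
  have s_kj : k * j + j * k = 0 := by rw [hjk]; abel
  have s_ik : i * k + k * i = 0 := by rw [hki]; abel
  have memi : i ∈ ({i, j, k} : Set A) := by simp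
  have memj : j ∈ ({i, j, k} : Set A) := by simp
  have memk : k ∈ ({i, j, k} : Set A) := by simp
  -- basic zeros
  have ui : (i * j) * i = 0 := by
    have h := Rc j i s_ji i; rw [hi, zero_mul, neg_zero] at h; exact h
  have uj : (i * j) * j = 0 := by rw [← halt2, hj, mul_zero]
  have iu : i * (i * j) = 0 := by rw [halt1, hi, zero_mul]
  have ju : j * (i * j) = 0 := by
    have h := Lc j i s_ji j; rw [hj, mul_zero, neg_zero] at h; exact h
  have hωi : ((i * j) * k) * i = 0 := by
    have h := Rc k i s_ki (i * j); rw [ui, zero_mul, neg_zero] at h; exact h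
  have hωj : ((i * j) * k) * j = 0 := by
    have h := Rc k j s_kj (i * j); rw [uj, zero_mul, neg_zero] at h; exact h
  have hωk : ((i * j) * k) * k = 0 := by rw [← halt2, hk, mul_zero]
  -- palindrome consequence
  have hpal1 : (i * j) * k = -(k * (i * j)) := by
    have h := hpal i memi j memj k memk
    rw [hji, mul_neg] at h; exact h
  have hiω : i * ((i * j) * k) = 0 := by
    rw [hpal1, mul_neg, Lc i k s_ik (i * j), iu, mul_zero, neg_zero, neg_zero]
  have hjω : j * ((i * j) * k) = 0 := by
    rw [hpal1, mul_neg, Lc j k s_jk (i * j), ju, mul_zero, neg_zero, neg_zero]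
  have hkω : k * ((i * j) * k) = 0 := by
    rw [hpal1, mul_neg, halt1, hk, zero_mul, neg_zero]
  have uu : (i * j) * (i * j) = 0 := by
    have h := L (i * j) i j
    rw [ui, iu, uj] at h
    simpa using h
  have sku : k * (i * j) + (i * j) * k = 0 := by rw [hpal1]; abel
  have hωu : ((i * j) * k) * (i * j) = 0 := by
    have h := R (i * j) k (i * j)
    rw [← mul_add, sku, mul_zero, uu, zero_mul, add_zero] at h
    exact h
  have g1 : (i * j) * (j * k) = 0 := by
    have h := L (i * j) j k
    rw [uj, ju, hjω] at h
    simpa using h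
  have kv : k * (j * k) = 0 := by
    have h := Lc k j s_kj k; rw [hk, mul_zero, neg_zero] at h; exact h
  have vk : (j * k) * k = 0 := by rw [← halt2, hk, mul_zero]
  have hωv : ((i * j) * k) * (j * k) = 0 := by
    have h := R (i * j) k (j * k)
    rw [g1, kv, vk] at h
    simpa using h
  have kuω : k * (i * j) = -((i * j) * k) := by rw [hpal1, neg_neg]
  have uw : (i * j) * (k * i) = 0 := by
    have h := L (i * j) k i
    rw [ui, hωi, kuω, neg_mul, hωi] at h
    simpa using h
  have kw : k * (k * i) = 0 := by rw [halt1, hk, zero_mul]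
  have wk : (k * i) * k = 0 := by
    have h := Rc i k s_ik k; rw [hk, zero_mul, neg_zero] at h; exact h
  have hωw : ((i * j) * k) * (k * i) = 0 := by
    have h := R (i * j) k (k * i)
    rw [uw, kw, wk] at h
    simpa using h
  have uω : (i * j) * ((i * j) * k) = 0 := by rw [halt1, uu, zero_mul]
  have hωω : ((i * j) * k) * ((i * j) * k) = 0 := by
    have h := R (i * j) k ((i * j) * k)
    rw [uω, hkω, hωk] at h
    simpa using h
  have vj : (j * k) * j = 0 := by
    have h := Rc k j s_kj j; rw [hj, zero_mul, neg_zero] at h; exact h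
  have vi : (j * k) * i = (i * j) * k := by
    have h := R j k i
    rw [← mul_add, s_ki, mul_zero, hji, neg_mul] at h
    exact eq_of_sub_eq_zero (by rw [sub_eq_add_neg]; exact h)
  have iv : i * (j * k) = -((i * j) * k) := by
    have h := hpal k memk j memj i memi
    rw [hkj, neg_mul, vi] at h
    exact h.symm
  have vu : (j * k) * (i * j) = 0 := by
    have h := L (j * k) i j
    rw [vj, vi, iv, neg_mul, hωj] at h
    simpa using h
  have hvω : (j * k) * ((i * j) * k) = 0 := by
    have h := L (j * k) k (i * j)
    rw [vk, kv, vu] at h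
    have h2 : (j * k) * (k * (i * j)) = 0 := by simpa using h
    rw [hpal1, mul_neg, h2, neg_zero]
  have g2 : (j * k) * (k * i) = 0 := by
    have h := L (j * k) k i
    rw [vk, kv, vi, hkω] at h
    simpa using h
  have wi : (k * i) * i = 0 := by rw [← halt2, hi, mul_zero]
  have iw : i * (k * i) = 0 := by
    have h := Lc i k s_ik i; rw [hi, mul_zero, neg_zero] at h; exact h
  have iwj : i * ((k * i) * j) = 0 := by
    have h := hpal k memk i memi j memj
    rw [h, Lc i j s_ij (i * k), halt1, hi, zero_mul, mul_zero, neg_zero]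
  have g3 : (k * i) * (i * j) = 0 := by
    have h := L (k * i) i j
    rw [wi, iw, iwj] at h
    simpa using h
  have hwω : (k * i) * ((i * j) * k) = 0 := by
    have h := L (k * i) k (i * j)
    rw [wk, kw, g3] at h
    have h2 : (k * i) * (k * (i * j)) = 0 := by simpa using h
    rw [hpal1, mul_neg, h2, neg_zero]
  refine ⟨?_, g1, g2, g3⟩
  intro x hx
  induction hx using Submodule.span_induction with
  | mem x hxs =>
    simp only [Set.mem_insert_iff, Set.mem_singleton_iff] at hxs
    rcases hxs with rfl | rfl | rfl | rfl | rfl | rfl | rfl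
    · exact ⟨hωi, hiω⟩
    · exact ⟨hωj, hjω⟩
    · exact ⟨hωk, hkω⟩
    · exact ⟨hωu, uω⟩
    · exact ⟨hωv, hvω⟩
    · exact ⟨hωw, hwω⟩
    · exact ⟨hωω, hωω⟩
  | zero => exact ⟨mul_zero _, zero_mul _⟩
  | add x y hx hy ihx ihy =>
    exact ⟨by rw [mul_add, ihx.1, ihy.1, add_zero],
      by rw [add_mul, ihx.2, ihy.2, add_zero]⟩
  | smul c x hx ihx =>
    exact ⟨by rw [mul_smul_comm, ihx.1, smul_zero],
      by rw [smul_mul_assoc, ihx.2, smul_zero]⟩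
end

section
/- Let A be a unital alternative algebra over a field with 2 invertible, and let i, j, k be pairwise anticommuting elements with i² = α·1, j² = β·1, k² = γ·1 (α, β, γ scalars), satisfying (xy)z = z(yx) for x,y,z ∈ {i,j,k}, and set ω = (ij)k. Then ω² = αβγ·1. -/
section Aux

variable {A : Type*} [NonAssocRing A]

/-- Linearization of left alternativity: the associator is skew in slots 1,2. -/
lemma asc_swap12 (halt1 : ∀ x y : A, x * (x * y) = (x * x) * y) (x y z : A) :
    (x * y) * z - x * (y * z) = -((y * x) * z - y * (x * z)) := by
  have h := halt1 (x + y) z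
  simp only [add_mul, mul_add] at h
  rw [halt1 x z, halt1 y z] at h
  linear_combination (norm := abel) -h

/-- Linearization of right alternativity: the associator is skew in slots 2,3. -/
lemma asc_swap23 (halt2 : ∀ x y : A, y * (x * x) = (y * x) * x) (x y z : A) :
    (x * y) * z - x * (y * z) = -((x * z) * y - x * (z * y)) := by
  have h := halt2 (y + z) x
  simp only [add_mul, mul_add] at h
  rw [halt2 y x, halt2 z x] at h
  linear_combination (norm := abel) -h

/-- `[y, yx, x] = 0` in an alternative ring. -/
lemma asc_mid (halt1 : ∀ x y : A, x * (x * y) = (x * x) * y)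
    (halt2 : ∀ x y : A, y * (x * x) = (y * x) * x) (x y : A) :
    (y * (y * x)) * x = y * ((y * x) * x) := by
  calc (y * (y * x)) * x = ((y * y) * x) * x := by rw [halt1]
    _ = (y * y) * (x * x) := (halt2 x (y * y)).symm
    _ = y * (y * (x * x)) := (halt1 y (x * x)).symm
    _ = y * ((y * x) * x) := by rw [halt2 x y]

/-- `(xy)(yx) = x(y(yx))` in an alternative ring. -/
lemma key (halt1 : ∀ x y : A, x * (x * y) = (x * x) * y)
    (halt2 : ∀ x y : A, y * (x * x) = (y * x) * x) (x y : A) :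
    (x * y) * (y * x) = x * (y * (y * x)) := by
  have h0 : (y * (y * x)) * x - y * ((y * x) * x) = 0 :=
    sub_eq_zero.mpr (asc_mid halt1 halt2 x y)
  have h1 := asc_swap12 halt1 x y (y * x)
  have h2 := asc_swap23 halt2 y (y * x) x
  -- [x,y,yx] = -[y,x,yx] = [y,yx,x] = 0
  have h3 : (x * y) * (y * x) - x * (y * (y * x)) = 0 := by
    rw [h1, ← h2]
    exact h0
  exact sub_eq_zero.mp h3

end Aux

theorem omega_squared
    {F A : Type*} [Field F] [Invertible (2 : F)]
    [NonAssocRing A] [Module F A] [SMulCommClass F A A] [IsScalarTower F A A]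
    (halt1 : ∀ x y : A, x * (x * y) = (x * x) * y)
    (halt2 : ∀ x y : A, y * (x * x) = (y * x) * x)
    (i j k : A) (α β γ : F)
    (hi : i * i = α • (1 : A)) (hj : j * j = β • (1 : A))
    (hk : k * k = γ • (1 : A))
    (hij : i * j = -(j * i)) (hjk : j * k = -(k * j)) (hki : k * i = -(i * k))
    (hpal : ∀ x ∈ ({i, j, k} : Set A), ∀ y ∈ ({i, j, k} : Set A),
      ∀ z ∈ ({i, j, k} : Set A), (x * y) * z = z * (y * x)) :
    ((i * j) * k) * ((i * j) * k) = (α * β * γ) • (1 : A) := by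
  have hji : j * i = -(i * j) := by rw [hij, neg_neg]
  have hmem_i : i ∈ ({i, j, k} : Set A) := by simp
  have hmem_j : j ∈ ({i, j, k} : Set A) := by simp
  have hmem_k : k ∈ ({i, j, k} : Set A) := by simp
  -- ω = (ij)k = k(ji) = -(k(ij))
  have hω : (i * j) * k = -(k * (i * j)) := by
    rw [hpal i hmem_i j hmem_j k hmem_k, hji, mul_neg]
  -- a² where a = ij
  have ha2 : (i * j) * (i * j) = (-(α * β)) • (1 : A) := by
    have h := key halt1 halt2 i j
    calc (i * j) * (i * j) = (i * j) * (-(j * i)) := by rw [hji, neg_neg]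
      _ = -((i * j) * (j * i)) := by rw [mul_neg]
      _ = -(i * (j * (j * i))) := by rw [key halt1 halt2 i j]
      _ = -(i * ((j * j) * i)) := by rw [halt1 j i]
      _ = -(i * ((β • (1:A)) * i)) := by rw [hj]
      _ = -(i * (β • i)) := by rw [smul_mul_assoc, one_mul]
      _ = -(β • (i * i)) := by rw [mul_smul_comm]
      _ = -(β • (α • (1:A))) := by rw [hi]
      _ = (-(α * β)) • (1 : A) := by rw [smul_smul, neg_smul, mul_comm]
  calc ((i * j) * k) * ((i * j) * k)
      = ((i * j) * k) * (-(k * (i * j))) := by rw [← hω]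
    _ = -(((i * j) * k) * (k * (i * j))) := by rw [mul_neg]
    _ = -((i * j) * (k * (k * (i * j)))) := by rw [key halt1 halt2 (i * j) k]
    _ = -((i * j) * ((k * k) * (i * j))) := by rw [halt1 k (i * j)]
    _ = -((i * j) * ((γ • (1:A)) * (i * j))) := by rw [hk]
    _ = -((i * j) * (γ • (i * j))) := by rw [smul_mul_assoc, one_mul]
    _ = -(γ • ((i * j) * (i * j))) := by rw [mul_smul_comm]
    _ = -(γ • ((-(α * β)) • (1 : A))) := by rw [ha2]
    _ = (α * β * γ) • (1 : A) := by rw [smul_smul, ← neg_smul]; ring_nf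
end
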